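/- For all natural numbers n ≥ 1 and r with 1 ≤ r ≤ n, ∫₀¹ (−log(1 − r/(n+1)) + log(1 − x))² · x^{r−1}(1 − x)^{n−r} / B(r, n+1−r) dx = ∑_{k=n+1−r}^{n} 1/k² + ( log(1 − r/(n+1)) + H_n − H_{n−r} )², where B denotes the Beta function and H_m := ∑_{k=1}^{m} 1/k is the m-th harmonic number (H_0 := 0). -/

import Mathlib

/-- `harmonicR m = H_m = ∑_{k=1}^m 1/k`, with `H_0 = 0`. -/
noncomputable def harmonicR (m : ℕ) : ℝ := ∑ k ∈ Finset.range m, (1 : ℝ) / (k + 1)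

/-- The Beta function at natural arguments: `B(a, b) = ∫₀¹ t^(a−1) (1−t)^(b−1) dt`. -/
noncomputable def betaFn (a b : ℕ) : ℝ := ∫ t in (0 : ℝ)..1, t ^ (a - 1) * (1 - t) ^ (b - 1)

/-!
Reflecting `x ↦ 1 - x` and expanding the square reduces the integral to the log-moments
`M_k(a, b) = ∫₀¹ x^a (1-x)^b (log x)^k`, `k ≤ 2`. Since `(1-x)^(b+1) = (1-x)^b - x (1-x)^b`,
they satisfy the Pascal recurrence `M(a, b+1) = M(a, b) - M(a+1, b)`, which determines them from
`M_k(a, 0) = ∫₀¹ x^a (log x)^k`. The closed forms `B`, `-B (H_{a+b+1} - H_a)` and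
`B ((H_{a+b+1} - H_a)² + H⁽²⁾_{a+b+1} - H⁽²⁾_a)`, with `B = a! b! / (a+b+1)!`, satisfy the
same recurrence and initial values.
-/

open Real Set intervalIntegral
open MeasureTheory (volume)
open scoped Nat

lemma continuousOn_mul_log_sq : ContinuousOn (fun x => x * log x ^ 2) (Ici 0) := by
  have h : Continuous fun x => 4 * (√x * log √x) ^ 2 :=
    continuous_const.mul ((continuous_mul_log.comp continuous_sqrt).pow 2)
  refine h.continuousOn.congr fun x (hx : 0 ≤ x) => ?_
  simp only [log_sqrt hx, mul_pow, sq_sqrt hx]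
  ring

lemma integral_pow_mul_log (m : ℕ) :
    ∫ x in (0:ℝ)..1, x ^ m * log x = -1 / ((m:ℝ) + 1) ^ 2 := by
  have hcont : ContinuousOn (fun x => x ^ (m + 1) * (log x / (m + 1) - 1 / ((m:ℝ) + 1) ^ 2))
      (Icc 0 1) := by
    have hmul_log := continuous_mul_log
    refine ContinuousOn.congr
      (f := fun x => x ^ m * (x * log x) / (m + 1) - x ^ (m + 1) / ((m:ℝ) + 1) ^ 2)
      (by fun_prop) fun x _ => by ring
  rw [integral_eq_sub_of_hasDerivAt_of_le zero_le_one hcont (fun x hx => ?_)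
    (intervalIntegrable_log'.continuousOn_mul (continuous_pow m).continuousOn)]
  · simp
    ring
  · refine ((hasDerivAt_pow (m + 1) x).mul
      (((hasDerivAt_log hx.1.ne').div_const ((m:ℝ) + 1)).sub_const _)).congr_deriv ?_
    field_simp [hx.1.ne']
    push_cast
    ring

lemma continuousOn_pow_mul_log_sq_primitive (m : ℕ) :
    ContinuousOn (fun x => x ^ (m + 1) *
      (log x ^ 2 / (m + 1) - 2 * log x / ((m:ℝ) + 1) ^ 2 + 2 / ((m:ℝ) + 1) ^ 3)) (Icc 0 1) := by
  have hmul_log_sq : ContinuousOn (fun x => x * log x ^ 2) (Icc 0 1) :=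
    continuousOn_mul_log_sq.mono Icc_subset_Ici_self
  have hmul_log := continuous_mul_log
  refine ContinuousOn.congr (f := fun x => x ^ m * (x * log x ^ 2) / (m + 1)
    - 2 * (x ^ m * (x * log x)) / ((m:ℝ) + 1) ^ 2 + 2 * x ^ (m + 1) / ((m:ℝ) + 1) ^ 3)
    (by fun_prop) fun x _ => by ring

lemma hasDerivAt_pow_mul_log_sq_primitive (m : ℕ) {x : ℝ} (hx : x ≠ 0) :
    HasDerivAt (fun x => x ^ (m + 1) *
      (log x ^ 2 / (m + 1) - 2 * log x / ((m:ℝ) + 1) ^ 2 + 2 / ((m:ℝ) + 1) ^ 3))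
      (x ^ m * log x ^ 2) x := by
  have hlog := hasDerivAt_log hx
  refine ((hasDerivAt_pow (m + 1) x).mul ((((hlog.fun_pow 2).div_const ((m:ℝ) + 1)).sub
    ((hlog.const_mul 2).div_const (((m:ℝ) + 1) ^ 2))).add_const _)).congr_deriv ?_
  simp only [Pi.sub_apply]
  field_simp
  push_cast
  ring

lemma intervalIntegrable_pow_mul_log_sq (m : ℕ) :
    IntervalIntegrable (fun x => x ^ m * log x ^ 2) volume 0 1 := by
  refine intervalIntegrable_deriv_of_nonneg
    (by simpa using continuousOn_pow_mul_log_sq_primitive m)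
    (fun x hx => hasDerivAt_pow_mul_log_sq_primitive m ?_) (fun x hx => ?_)
  all_goals simp only [zero_le_one, min_eq_left, max_eq_right] at hx
  · exact hx.1.ne'
  · have := hx.1.le
    positivity

lemma integral_pow_mul_log_sq (m : ℕ) :
    ∫ x in (0:ℝ)..1, x ^ m * log x ^ 2 = 2 / ((m:ℝ) + 1) ^ 3 := by
  rw [integral_eq_sub_of_hasDerivAt_of_le zero_le_one (continuousOn_pow_mul_log_sq_primitive m)
    (fun x hx => hasDerivAt_pow_mul_log_sq_primitive m hx.1.ne')
    (intervalIntegrable_pow_mul_log_sq m)]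
  simp

lemma intervalIntegrable_log_sq : IntervalIntegrable (fun x => log x ^ 2) volume 0 1 := by
  simpa using intervalIntegrable_pow_mul_log_sq 0

noncomputable def harmonicSqR (m : ℕ) : ℝ := ∑ k ∈ Finset.range m, (1 : ℝ) / (k + 1) ^ 2

lemma harmonicR_succ (m : ℕ) : harmonicR (m + 1) = harmonicR m + 1 / (m + 1) :=
  Finset.sum_range_succ _ _

lemma harmonicSqR_succ (m : ℕ) : harmonicSqR (m + 1) = harmonicSqR m + 1 / (m + 1) ^ 2 :=
  Finset.sum_range_succ _ _

lemma sum_Icc_one_div_sq {b n : ℕ} (h : b ≤ n) :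
    ∑ k ∈ Finset.Icc (b + 1) n, (1 : ℝ) / (k : ℝ) ^ 2 = harmonicSqR n - harmonicSqR b := by
  induction n, h using Nat.le_induction with
  | base => simp
  | succ n hbn ih =>
    rw [Finset.Icc_add_one_left_eq_Ioc] at ih ⊢
    rw [Finset.sum_Ioc_succ_top hbn, ih, harmonicSqR_succ]
    push_cast
    ring

-- `betaNat a b = B(a + 1, b + 1)`
noncomputable def betaNat (a b : ℕ) : ℝ := a ! * b ! / (a + b + 1)!

lemma betaNat_pos (a b : ℕ) : 0 < betaNat a b := by
  unfold betaNat
  positivity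

lemma betaNat_comm (a b : ℕ) : betaNat a b = betaNat b a := by
  rw [betaNat, betaNat, add_comm a b, mul_comm]

lemma betaNat_zero_right (a : ℕ) : betaNat a 0 = 1 / (a + 1) := by
  rw [betaNat, add_zero, Nat.factorial_succ]
  push_cast [Nat.factorial_zero]
  field_simp

lemma betaNat_succ_left (a b : ℕ) :
    betaNat (a + 1) b = betaNat a b * (a + 1) / (a + b + 2) := by
  rw [betaNat, betaNat, show a + 1 + b + 1 = a + b + 1 + 1 by ring,
    Nat.factorial_succ (a + b + 1), Nat.factorial_succ a]
  push_cast
  field_simp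
  ring

lemma betaNat_succ_right (a b : ℕ) :
    betaNat a (b + 1) = betaNat a b * (b + 1) / (a + b + 2) := by
  rw [betaNat_comm, betaNat_succ_left, betaNat_comm]
  ring

lemma eq_of_pascal_recurrence {M : Type*} [Sub M] {f g : ℕ → ℕ → M}
    (h0 : ∀ a, f a 0 = g a 0)
    (hf : ∀ a b, f a (b + 1) = f a b - f (a + 1) b)
    (hg : ∀ a b, g a (b + 1) = g a b - g (a + 1) b) (a b : ℕ) : f a b = g a b := by
  induction b generalizing a with
  | zero => exact h0 a
  | succ b ih => rw [hf, hg, ih, ih]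

noncomputable def logMoment (k a b : ℕ) : ℝ := ∫ x in (0:ℝ)..1, x ^ a * (1 - x) ^ b * log x ^ k

lemma IntervalIntegrable.pow_mul_one_sub_pow_mul {f : ℝ → ℝ}
    (hf : IntervalIntegrable f volume 0 1) (a b : ℕ) :
    IntervalIntegrable (fun x => x ^ a * (1 - x) ^ b * f x) volume 0 1 :=
  hf.continuousOn_mul (by fun_prop)

lemma logMoment_succ_right {k : ℕ} (hk : IntervalIntegrable (fun x => log x ^ k) volume 0 1)
    (a b : ℕ) : logMoment k a (b + 1) = logMoment k a b - logMoment k (a + 1) b := by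
  rw [logMoment, logMoment, logMoment, ← integral_sub (hk.pow_mul_one_sub_pow_mul a b)
    (hk.pow_mul_one_sub_pow_mul (a + 1) b)]
  congr 1 with x
  ring

lemma logMoment_zero (a b : ℕ) : logMoment 0 a b = betaNat a b := by
  revert a b
  refine eq_of_pascal_recurrence (fun a => ?_) (logMoment_succ_right (by simp)) (fun a b => ?_)
  · simp [logMoment, betaNat_zero_right, integral_pow]
  · rw [betaNat_succ_left, betaNat_succ_right]
    field_simp
    ring

lemma logMoment_one (a b : ℕ) :
    logMoment 1 a b = -(betaNat a b * (harmonicR (a + b + 1) - harmonicR a)) := by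
  revert a b
  refine eq_of_pascal_recurrence (fun a => ?_)
    (logMoment_succ_right (by simp [intervalIntegrable_log'])) (fun a b => ?_)
  · simp [logMoment, betaNat_zero_right, integral_pow_mul_log, harmonicR_succ]
    field_simp
  · rw [betaNat_succ_left, betaNat_succ_right, show a + (b + 1) + 1 = a + b + 1 + 1 by ring,
      show a + 1 + b + 1 = a + b + 1 + 1 by ring, harmonicR_succ (a + b + 1), harmonicR_succ a]
    push_cast
    field_simp
    ring

lemma logMoment_two (a b : ℕ) : logMoment 2 a b = betaNat a b *
    ((harmonicR (a + b + 1) - harmonicR a) ^ 2 + (harmonicSqR (a + b + 1) - harmonicSqR a)) := by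
  revert a b
  refine eq_of_pascal_recurrence (fun a => ?_)
    (logMoment_succ_right intervalIntegrable_log_sq) (fun a b => ?_)
  · simp [logMoment, betaNat_zero_right, integral_pow_mul_log_sq, harmonicR_succ,
      harmonicSqR_succ]
    field_simp
    ring
  · rw [betaNat_succ_left, betaNat_succ_right, show a + (b + 1) + 1 = a + b + 1 + 1 by ring,
      show a + 1 + b + 1 = a + b + 1 + 1 by ring, harmonicR_succ (a + b + 1), harmonicR_succ a,
      harmonicSqR_succ (a + b + 1), harmonicSqR_succ a]
    push_cast
    field_simp
    ring

lemma integral_pow_mul_one_sub_pow_mul_log_sub_sq (a b : ℕ) (c : ℝ) :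
    ∫ x in (0:ℝ)..1, x ^ a * (1 - x) ^ b * (log x - c) ^ 2
      = logMoment 2 a b - 2 * c * logMoment 1 a b + c ^ 2 * logMoment 0 a b := by
  have h0 := (intervalIntegrable_const (c := (1:ℝ))).pow_mul_one_sub_pow_mul a b
  have h1 := (intervalIntegrable_log' (a := 0) (b := 1)).pow_mul_one_sub_pow_mul a b
  have h2 := intervalIntegrable_log_sq.pow_mul_one_sub_pow_mul a b
  simp only [logMoment, pow_zero, pow_one]
  rw [← integral_const_mul, ← integral_const_mul, ← integral_sub h2 (h1.const_mul _),
    ← integral_add (h2.sub (h1.const_mul _)) (h0.const_mul _)]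
  congr 1 with x
  ring

theorem mse_alpha_hat_prime_general (n r : ℕ) (hr1 : 1 ≤ r) (hrn : r ≤ n) :
    ∫ x in (0 : ℝ)..1,
        (-Real.log (1 - (r : ℝ) / (n + 1)) + Real.log (1 - x)) ^ 2 *
          (x ^ (r - 1) * (1 - x) ^ (n - r) / betaFn r (n + 1 - r))
      = (∑ k ∈ Finset.Icc (n + 1 - r) n, (1 : ℝ) / (k : ℝ) ^ 2)
        + (Real.log (1 - (r : ℝ) / (n + 1)) + (harmonicR n - harmonicR (n - r))) ^ 2 := by
  obtain ⟨a, rfl⟩ : ∃ a, r = a + 1 := ⟨r - 1, by omega⟩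
  obtain ⟨b, rfl⟩ : ∃ b, n = a + b + 1 := ⟨n - (a + 1), by omega⟩
  have hβ : betaFn (a + 1) (a + b + 1 + 1 - (a + 1)) = betaNat a b := by
    rw [betaFn, ← logMoment_zero, show a + b + 1 + 1 - (a + 1) - 1 = b by omega]
    simp [logMoment]
  set c := log (1 - ((a + 1 : ℕ) : ℝ) / ((a + b + 1 : ℕ) + 1))
  have hreflect : ∫ x in (0:ℝ)..1, (-c + log (1 - x)) ^ 2 * (x ^ a * (1 - x) ^ b / betaNat a b)
      = (∫ x in (0:ℝ)..1, x ^ b * (1 - x) ^ a * (log x - c) ^ 2) / betaNat a b := by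
    have h := integral_comp_sub_left (a := 0) (b := 1)
      (fun x => x ^ b * (1 - x) ^ a * (log x - c) ^ 2 / betaNat a b) 1
    rw [sub_zero, sub_self] at h
    rw [← integral_div, ← h]
    congr 1 with x
    ring
  rw [hβ, Nat.add_sub_cancel, show a + b + 1 - (a + 1) = b by omega,
    show a + b + 1 + 1 - (a + 1) = b + 1 by omega, hreflect,
    integral_pow_mul_one_sub_pow_mul_log_sub_sq, logMoment_zero, logMoment_one, logMoment_two,
    sum_Icc_one_div_sq (by omega), betaNat_comm b a, show b + a + 1 = a + b + 1 by ring]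
  field_simp [(betaNat_pos a b).ne']
  ring

/-- **MSE of α̂′.** The mean squared error of the alternative AURC weight
`α̂′ = −log(1 − r/(n+1))` under `β ∼ Beta(r, n+1−r)` equals
`∑_{k=n+1−r}^{n} 1/k² + (log(1 − r/(n+1)) + H_n − H_{n−r})²`. -/
theorem mse_alpha_hat_prime (n r : ℕ) (hn : 1 ≤ n) (hr1 : 1 ≤ r) (hrn : r ≤ n) :
    ∫ x in (0 : ℝ)..1,
        (-Real.log (1 - (r : ℝ) / (n + 1)) + Real.log (1 - x)) ^ 2 *
          (x ^ (r - 1) * (1 - x) ^ (n - r) / betaFn r (n + 1 - r))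
      = (∑ k ∈ Finset.Icc (n + 1 - r) n, (1 : ℝ) / (k : ℝ) ^ 2)
        + (Real.log (1 - (r : ℝ) / (n + 1)) + (harmonicR n - harmonicR (n - r))) ^ 2 :=
  mse_alpha_hat_prime_general n r hr1 hrn
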